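/- Fix μ* > 0 and ε ∈ ℝ, and let δ_G = f(μ*, ε) where f(μ, ε) = Φ(μ/2 - ε/μ) - e^ε Φ(-μ/2 - ε/μ). Define t(β) = f(μ*, ε + ln β) for β ∈ (0, 1]. Then the second derivative of t satisfies t''(β) = φ(μ*/2 - (ε + ln β)/μ*) / (β² μ*), which is strictly positive on (0, 1]; i.e., t is strictly convex on (0, 1]. -/

import Mathlib

/-!
Writing `u = ε + log β`, the Gaussian likelihood-ratio identity `φ(μ/2 - u/μ) = eᵘ φ(-μ/2 - u/μ)`
makes the two density terms in `∂ᵤ f(μ, u)` cancel, so `t'(β) = -e^ε Φ(-μ/2 - (ε + log β)/μ)`.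
Differentiating once more and applying the same identity gives `t''(β) = φ(…)/(β² μ) > 0`.
-/

noncomputable def stdNormalPDF (x : ℝ) : ℝ :=
  (Real.sqrt (2 * Real.pi))⁻¹ * Real.exp (-x ^ 2 / 2)

noncomputable def stdNormalCDF (x : ℝ) : ℝ := ∫ t in Set.Iic x, stdNormalPDF t

noncomputable def gaussF (μ ε : ℝ) : ℝ :=
  stdNormalCDF (μ / 2 - ε / μ) - Real.exp ε * stdNormalCDF (-μ / 2 - ε / μ)

open Real Set MeasureTheory ProbabilityTheory

theorem hasDerivAt_integral_Iic {f : ℝ → ℝ} (hf : Integrable f) (hc : Continuous f) (x : ℝ) :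
    HasDerivAt (fun y => ∫ t in Iic y, f t) (f x) x := by
  have hsplit : (fun y => ∫ t in Iic y, f t) = fun y => (∫ t in Iic 0, f t) + ∫ t in 0..y, f t := by
    funext y
    rw [← intervalIntegral.integral_Iic_sub_Iic hf.integrableOn hf.integrableOn]
    ring
  rw [hsplit]
  exact (intervalIntegral.integral_hasDerivAt_right hf.intervalIntegrable
    hc.stronglyMeasurable.stronglyMeasurableAtFilter hc.continuousAt).const_add _

theorem stdNormalPDF_eq_gaussianPDFReal : stdNormalPDF = gaussianPDFReal 0 1 := by
  funext x
  simp [stdNormalPDF, gaussianPDFReal]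

theorem stdNormalPDF_pos (x : ℝ) : 0 < stdNormalPDF x := by
  rw [stdNormalPDF_eq_gaussianPDFReal]
  exact gaussianPDFReal_pos 0 1 x one_ne_zero

theorem hasDerivAt_stdNormalCDF (x : ℝ) : HasDerivAt stdNormalCDF (stdNormalPDF x) x :=
  hasDerivAt_integral_Iic (stdNormalPDF_eq_gaussianPDFReal ▸ integrable_gaussianPDFReal 0 1)
    (by unfold stdNormalPDF; fun_prop) x

theorem stdNormalPDF_half_sub_div {μ : ℝ} (hμ : μ ≠ 0) (u : ℝ) :
    stdNormalPDF (μ / 2 - u / μ) = exp u * stdNormalPDF (-μ / 2 - u / μ) := by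
  have hexp : -(μ / 2 - u / μ) ^ 2 / 2 = u + -(-μ / 2 - u / μ) ^ 2 / 2 := by
    field_simp
    ring
  rw [stdNormalPDF, stdNormalPDF, hexp, exp_add]
  ring

theorem hasDerivAt_gaussF {μ : ℝ} (hμ : μ ≠ 0) (u : ℝ) :
    HasDerivAt (gaussF μ) (-(exp u * stdNormalCDF (-μ / 2 - u / μ))) u := by
  have hA := (hasDerivAt_stdNormalCDF (μ / 2 - u / μ)).comp u
    (((hasDerivAt_id' u).div_const μ).const_sub (μ / 2))
  have hB := (hasDerivAt_stdNormalCDF (-μ / 2 - u / μ)).comp u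
    (((hasDerivAt_id' u).div_const μ).const_sub (-μ / 2))
  refine (hA.sub ((hasDerivAt_exp u).mul hB)).congr_deriv ?_
  rw [stdNormalPDF_half_sub_div hμ, Function.comp_apply]
  ring

theorem hasDerivAt_gaussF_add_log {μ : ℝ} (hμ : μ ≠ 0) (ε : ℝ) {b : ℝ} (hb : 0 < b) :
    HasDerivAt (fun b => gaussF μ (ε + log b))
      (-(exp ε * stdNormalCDF (-μ / 2 - (ε + log b) / μ))) b := by
  refine ((hasDerivAt_gaussF hμ (ε + log b)).comp b
    ((hasDerivAt_log hb.ne').const_add ε)).congr_deriv ?_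
  rw [exp_add, exp_log hb]
  field_simp

theorem hasDerivAt_deriv_gaussF_add_log {μ : ℝ} (hμ : μ ≠ 0) (ε : ℝ) {b : ℝ} (hb : 0 < b) :
    HasDerivAt (deriv fun b => gaussF μ (ε + log b))
      (stdNormalPDF (μ / 2 - (ε + log b) / μ) / (b ^ 2 * μ)) b := by
  have hderiv : (deriv fun b => gaussF μ (ε + log b))
      =ᶠ[nhds b] fun b => -(exp ε * stdNormalCDF (-μ / 2 - (ε + log b) / μ)) := by
    filter_upwards [Ioi_mem_nhds hb] with c hc
    exact (hasDerivAt_gaussF_add_log hμ ε hc).deriv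
  refine HasDerivAt.congr_of_eventuallyEq ?_ hderiv
  refine (((hasDerivAt_stdNormalCDF _).comp b
    ((((hasDerivAt_log hb.ne').const_add ε).div_const μ).const_sub (-μ / 2))).const_mul
    (exp ε)).neg.congr_deriv ?_
  rw [stdNormalPDF_half_sub_div hμ, exp_add, exp_log hb]
  field_simp

theorem gaussF_log_strictConvex (μs ε : ℝ) (hμ : 0 < μs) :
    (∀ β ∈ Set.Ioc (0 : ℝ) 1,
      deriv (deriv (fun b => gaussF μs (ε + Real.log b))) β
          = stdNormalPDF (μs / 2 - (ε + Real.log β) / μs) / (β ^ 2 * μs) ∧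
      0 < stdNormalPDF (μs / 2 - (ε + Real.log β) / μs) / (β ^ 2 * μs)) ∧
    StrictConvexOn ℝ (Set.Ioc (0 : ℝ) 1) (fun b => gaussF μs (ε + Real.log b)) := by
  have hsecond : ∀ β ∈ Ioi (0 : ℝ),
      deriv (deriv (fun b => gaussF μs (ε + log b))) β
          = stdNormalPDF (μs / 2 - (ε + log β) / μs) / (β ^ 2 * μs) ∧
        0 < stdNormalPDF (μs / 2 - (ε + log β) / μs) / (β ^ 2 * μs) := fun β hβ =>
    ⟨(hasDerivAt_deriv_gaussF_add_log hμ.ne' ε hβ).deriv,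
      div_pos (stdNormalPDF_pos _) (mul_pos (pow_pos hβ 2) hμ)⟩
  refine ⟨fun β hβ => hsecond β hβ.1, ?_⟩
  refine strictConvexOn_of_deriv2_pos (convex_Ioc 0 1)
    (fun x hx => (hasDerivAt_gaussF_add_log hμ.ne' ε hx.1).continuousAt.continuousWithinAt)
    fun x hx => ?_
  rw [interior_Ioc] at hx
  rw [Function.iterate_succ_apply, Function.iterate_one, (hsecond x hx.1).1]
  exact (hsecond x hx.1).2
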